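/- In the graph G_n = (Xⁿ, E_n): every vertex in W₁ has degree two, with both of its incident edges lying in F₁; and for each 2 ≤ k ≤ n, every vertex in W_k has degree three, with exactly two incident edges in F₁ and the third in F_k. -/
import Mathlib


open Classical

/-- Words of length `n` over the alphabet `X = {0,…,5} = ℤ/6`.  (Words are 0-indexed:
the letter `x_k` of the paper, `1 ≤ k ≤ n`, is `x j` for the index `j : Fin n` with
`(j : ℕ) + 1 = k`.) -/
abbrev Wrd (n : ℕ) := Fin n → ZMod 6

/-- `W₁`: words whose second through last letters are all `0`s or `5`s. -/
def W1 (n : ℕ) : Set (Wrd n) :=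
  {x | ∀ j : Fin n, 1 ≤ (j : ℕ) → (x j = 0 ∨ x j = 5)}

/-- `W_k` (for `2 ≤ k ≤ n`): words with `x_k ∉ {0,5}` and `x_i ∈ {0,5}` for
`k < i ≤ n`. -/
def Wk (n k : ℕ) : Set (Wrd n) :=
  {x | ∀ j : Fin n, ((j : ℕ) + 1 = k → ¬(x j = 0 ∨ x j = 5)) ∧
      (k < (j : ℕ) + 1 → (x j = 0 ∨ x j = 5))}

/-- `F₁`: unordered pairs `{xi, xj}` with `x ∈ X^{n−1}`, `j = i + 1` (mod 6). -/
def F1 (n : ℕ) : Set (Sym2 (Wrd n)) :=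
  {e | ∃ u w : Wrd n, e = s(u, w) ∧ (∀ j : Fin n, (j : ℕ) + 1 < n → u j = w j) ∧
      ∀ j : Fin n, (j : ℕ) + 1 = n → w j = u j + 1}

/-- `F_k` (for `2 ≤ k ≤ n`): unordered pairs `{x i α v, x j α v}` with `x ∈ X^{k−2}`,
`j = i + 1 (mod 6)`, `v ∈ {0,5}^{n−k}`, and `α ∈ {3,4}` if `i` is odd, `α ∈ {1,2}` if
`i` is even.  (Here `i` sits at 1-indexed position `k − 1` and `α` at position `k`.) -/
def Fk (n k : ℕ) : Set (Sym2 (Wrd n)) :=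
  {e | ∃ u w : Wrd n, e = s(u, w) ∧
    (∀ j : Fin n, (j : ℕ) + 1 ≠ k - 1 → u j = w j) ∧
    (∀ j : Fin n, (j : ℕ) + 1 = k - 1 → (w j = u j + 1 ∧
      ((¬ Even (u j) ∧ ∀ j' : Fin n, (j' : ℕ) + 1 = k → (u j' = 3 ∨ u j' = 4)) ∨
        (Even (u j) ∧ ∀ j' : Fin n, (j' : ℕ) + 1 = k → (u j' = 1 ∨ u j' = 2))))) ∧
    (∀ j : Fin n, k < (j : ℕ) + 1 → (u j = 0 ∨ u j = 5))}

/-- The edge set `E_n = ⋃_{k=1}^{n} F_k`. -/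
def En (n : ℕ) : Set (Sym2 (Wrd n)) :=
  F1 n ∪ ⋃ k ∈ Finset.Icc 2 n, Fk n k

/-! ### Auxiliary lemmas -/

lemma even_zmod6 (x : ZMod 6) : Even x ↔ (x = 0 ∨ x = 2 ∨ x = 4) := by
  constructor
  · rintro ⟨r, rfl⟩; revert r; decide
  · rintro (rfl|rfl|rfl)
    · exact ⟨0, by decide⟩
    · exact ⟨1, by decide⟩
    · exact ⟨2, by decide⟩

instance : DecidablePred (Even : ZMod 6 → Prop) :=
  fun x => decidable_of_iff _ (even_zmod6 x).symm

lemma f1_iff {n : ℕ} (L : Fin n) (hL : (L : ℕ) + 1 = n) (u w : Wrd n) :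
    s(u, w) ∈ F1 n ↔
      w = Function.update u L (u L + 1) ∨ w = Function.update u L (u L - 1) := by
  constructor
  · rintro ⟨a, b, he, h1, h2⟩
    rcases Sym2.eq_iff.mp he with ⟨rfl, rfl⟩ | ⟨rfl, rfl⟩
    · left; funext j
      by_cases hj : j = L
      · subst hj; rw [Function.update_self]; exact h2 j hL
      · rw [Function.update_of_ne hj]
        exact (h1 j (by have := j.isLt; have : (j:ℕ) ≠ L := fun h => hj (Fin.ext h); omega)).symm
    · right; funext j
      by_cases hj : j = L
      · subst hj; rw [Function.update_self]
        have := h2 j hL; rw [this]; ring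
      · rw [Function.update_of_ne hj]
        exact h1 j (by have := j.isLt; have : (j:ℕ) ≠ L := fun h => hj (Fin.ext h); omega)
  · rintro (rfl | rfl)
    · refine ⟨u, _, rfl, fun j hj => ?_, fun j hj => ?_⟩
      · rw [Function.update_of_ne (fun h => by subst h; omega)]
      · have : j = L := Fin.ext (by omega)
        subst this; rw [Function.update_self]
    · refine ⟨_, u, Sym2.eq_swap, fun j hj => ?_, fun j hj => ?_⟩
      · rw [Function.update_of_ne (fun h => by subst h; omega)]
      · have : j = L := Fin.ext (by omega)
        subst this; rw [Function.update_self]; ring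

/-- Necessary conditions on `u` for an `Fk`-edge at `u`. -/
lemma fk_necc {n k : ℕ} (hk2 : 2 ≤ k) (hkn : k ≤ n) {u w : Wrd n}
    (h : s(u, w) ∈ Fk n k) :
    ¬(u ⟨k - 1, by omega⟩ = 0 ∨ u ⟨k - 1, by omega⟩ = 5) ∧
      ∀ j : Fin n, k < (j : ℕ) + 1 → (u j = 0 ∨ u j = 5) := by
  obtain ⟨a, b, he, h1, h2, h3⟩ := h
  set K : Fin n := ⟨k - 1, by omega⟩ with hKdef
  have hK : (K : ℕ) + 1 = k := by simp [hKdef]; omega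
  set M : Fin n := ⟨k - 2, by omega⟩ with hMdef
  have hM : (M : ℕ) + 1 = k - 1 := by simp [hMdef]; omega
  have hKne : (K : ℕ) + 1 ≠ k - 1 := by omega
  have haK : ¬(a K = 0 ∨ a K = 5) := by
    obtain ⟨-, hd | hd⟩ := h2 M hM
    · rcases hd.2 K hK with h4 | h4 <;> rw [h4] <;> decide
    · rcases hd.2 K hK with h4 | h4 <;> rw [h4] <;> decide
  have habK : a K = b K := h1 K hKne
  have htail : ∀ j : Fin n, k < (j : ℕ) + 1 → (a j = 0 ∨ a j = 5) ∧ a j = b j := by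
    intro j hj
    exact ⟨h3 j hj, h1 j (by omega)⟩
  rcases Sym2.eq_iff.mp he with ⟨rfl, rfl⟩ | ⟨rfl, rfl⟩
  · exact ⟨haK, fun j hj => (htail j hj).1⟩
  · refine ⟨by rwa [← habK], fun j hj => ?_⟩
    rw [← (htail j hj).2]; exact (htail j hj).1

lemma fk_iff {n k : ℕ} (hk2 : 2 ≤ k) (hkn : k ≤ n) (M K : Fin n)
    (hM : (M : ℕ) + 1 = k - 1) (hK : (K : ℕ) + 1 = k) {u : Wrd n}
    (hu : u ∈ Wk n k) (w : Wrd n) :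
    s(u, w) ∈ Fk n k ↔
      w = Function.update u M
        (u M + if Even (u M) ↔ (u K = 1 ∨ u K = 2) then 1 else -1) := by
  have hMK : M ≠ K := by intro h; rw [h] at hM; omega
  have huK : ¬(u K = 0 ∨ u K = 5) := (hu K).1 hK
  have huK' : u K = 1 ∨ u K = 2 ∨ u K = 3 ∨ u K = 4 := by
    revert huK; generalize u K = x; revert x; decide
  have htail : ∀ j : Fin n, k < (j : ℕ) + 1 → (u j = 0 ∨ u j = 5) := fun j hj => (hu j).2 hj
  have hne34_12 : ∀ x : ZMod 6, (x = 3 ∨ x = 4) → ¬(x = 1 ∨ x = 2) := by decide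
  have hKuniq : ∀ j' : Fin n, (j' : ℕ) + 1 = k → j' = K := fun j' hj' => Fin.ext (by omega)
  have hMuniq : ∀ j : Fin n, (j : ℕ) + 1 = k - 1 → j = M := fun j hj => Fin.ext (by omega)
  constructor
  · rintro ⟨a, b, he, h1, h2, h3⟩
    rcases Sym2.eq_iff.mp he with ⟨rfl, rfl⟩ | ⟨rfl, rfl⟩
    · -- u is the lower endpoint, w = u + e_M
      obtain ⟨hwM, hd⟩ := h2 M hM
      have hcond : Even (u M) ↔ (u K = 1 ∨ u K = 2) := by
        rcases hd with ⟨hodd, h34⟩ | ⟨heven, h12⟩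
        · have := h34 K hK
          constructor
          · intro h; exact absurd h hodd
          · intro h; exact absurd h (hne34_12 _ this)
        · exact ⟨fun _ => h12 K hK, fun _ => heven⟩
      rw [if_pos hcond]
      funext j
      by_cases hj : j = M
      · subst hj; rw [Function.update_self, hwM]
      · rw [Function.update_of_ne hj]
        exact (h1 j (fun h => hj (hMuniq j h))).symm
    · -- w is the lower endpoint, w = u - e_M
      obtain ⟨huM, hd⟩ := h2 M hM
      have hwK : w K = u K := h1 K (by omega)
      have hwM : w M = u M - 1 := by rw [huM]; ring
      have hcond : ¬(Even (u M) ↔ (u K = 1 ∨ u K = 2)) := by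
        rcases hd with ⟨hodd, h34⟩ | ⟨heven, h12⟩
        · have h34K : u K = 3 ∨ u K = 4 := hwK ▸ h34 K hK
          have heuM : Even (u M) := by
            have : ¬ Even (u M - 1) := hwM ▸ hodd
            revert this; simp only [even_zmod6]; generalize u M = x; revert x; decide
          intro hc; exact hne34_12 _ h34K (hc.mp heuM)
        · have h12K : u K = 1 ∨ u K = 2 := hwK ▸ h12 K hK
          have hnuM : ¬ Even (u M) := by
            have : Even (u M - 1) := hwM ▸ heven
            revert this; simp only [even_zmod6]; generalize u M = x; revert x; decide
          intro hc; exact hnuM (hc.mpr h12K)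
      rw [if_neg hcond]
      funext j
      by_cases hj : j = M
      · subst hj; rw [Function.update_self, hwM]; ring
      · rw [Function.update_of_ne hj]
        exact h1 j (fun h => hj (hMuniq j h))
  · intro hw
    by_cases hc : Even (u M) ↔ (u K = 1 ∨ u K = 2)
    · rw [if_pos hc] at hw
      refine ⟨u, w, rfl, fun j hj => ?_, fun j hj => ?_, htail⟩
      · rw [hw, Function.update_of_ne (fun h => hj (by rw [h]; exact hM))]
      · have hjM : j = M := hMuniq j hj
        subst hjM
        refine ⟨by rw [hw, Function.update_self], ?_⟩
        by_cases he : Even (u j)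
        · exact Or.inr ⟨he, fun j' hj' => (hKuniq j' hj') ▸ (hc.mp he)⟩
        · refine Or.inl ⟨he, fun j' hj' => ?_⟩
          rw [hKuniq j' hj']
          have : ¬(u K = 1 ∨ u K = 2) := fun h => he (hc.mpr h)
          rcases huK' with h|h|h|h
          · exact absurd (Or.inl h) this
          · exact absurd (Or.inr h) this
          · exact Or.inl h
          · exact Or.inr h
    · rw [if_neg hc] at hw
      have hwM : w M = u M - 1 := by rw [hw, Function.update_self]; ring
      have hwj : ∀ j : Fin n, j ≠ M → w j = u j := fun j hj => by
        rw [hw, Function.update_of_ne hj]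
      refine ⟨w, u, Sym2.eq_swap, fun j hj => ?_, fun j hj => ?_, fun j hj => ?_⟩
      · exact hwj j (fun h => hj (by rw [h]; exact hM))
      · have hjM : j = M := hMuniq j hj
        subst hjM
        refine ⟨by rw [hwM]; ring, ?_⟩
        have hwK : w K = u K := hwj K hMK.symm
        by_cases he : Even (u j)
        · refine Or.inl ⟨?_, fun j' hj' => ?_⟩
          · rw [hwM]; revert he; simp only [even_zmod6]
            generalize u j = x; revert x; decide
          · rw [hKuniq j' hj', hwK]
            have h12 : ¬(u K = 1 ∨ u K = 2) := fun h => hc ⟨fun _ => h, fun _ => he⟩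
            rcases huK' with h|h|h|h
            · exact absurd (Or.inl h) h12
            · exact absurd (Or.inr h) h12
            · exact Or.inl h
            · exact Or.inr h
        · refine Or.inr ⟨?_, fun j' hj' => ?_⟩
          · rw [hwM]; revert he; simp only [even_zmod6]
            generalize u j = x; revert x; decide
          · rw [hKuniq j' hj', hwK]
            by_contra h12
            exact hc ⟨fun h => absurd h he, fun h => absurd h h12⟩
      · rw [hwj j (fun h => by rw [h] at hj; omega)]
        exact htail j hj

lemma en_iff {n : ℕ} (e : Sym2 (Wrd n)) :
    e ∈ En n ↔ e ∈ F1 n ∨ ∃ k, 2 ≤ k ∧ k ≤ n ∧ e ∈ Fk n k := by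
  simp only [En, Set.mem_union, Set.mem_iUnion, Finset.mem_Icc, exists_prop]
  constructor
  · rintro (h | ⟨k, ⟨h1, h2⟩, h3⟩)
    · exact Or.inl h
    · exact Or.inr ⟨k, h1, h2, h3⟩
  · rintro (h | ⟨k, h1, h2, h3⟩)
    · exact Or.inl h
    · exact Or.inr ⟨k, ⟨h1, h2⟩, h3⟩

set_option maxHeartbeats 1000000 in
/-- in the graph `G_n = (Xⁿ, E_n)`, every vertex of `W₁` has degree two
with both incident edges in `F₁`, and for `2 ≤ k ≤ n` every vertex of `W_k` has degree
three, with exactly two incident edges in `F₁` and the third in `F_k`. -/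
theorem stmt16 (n : ℕ) (hn : 1 ≤ n) :
    (∀ u ∈ W1 n, {w : Wrd n | w ≠ u ∧ s(u, w) ∈ En n}.ncard = 2 ∧
      ∀ w : Wrd n, w ≠ u → s(u, w) ∈ En n → s(u, w) ∈ F1 n) ∧
    (∀ k, 2 ≤ k → k ≤ n → ∀ u ∈ Wk n k,
      {w : Wrd n | w ≠ u ∧ s(u, w) ∈ En n}.ncard = 3 ∧
      {w : Wrd n | w ≠ u ∧ s(u, w) ∈ F1 n}.ncard = 2 ∧
      {w : Wrd n | w ≠ u ∧ s(u, w) ∈ Fk n k}.ncard = 1) := by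
  set L : Fin n := ⟨n - 1, by omega⟩ with hLdef
  have hL : (L : ℕ) + 1 = n := by simp [hLdef]; omega
  have hadd : ∀ x : ZMod 6, x + 1 ≠ x := by decide
  have hsub : ∀ x : ZMod 6, x - 1 ≠ x := by decide
  have haddsub : ∀ x : ZMod 6, x + 1 ≠ x - 1 := by decide
  -- the two F1-neighbours of any vertex
  have hane : ∀ u : Wrd n, Function.update u L (u L + 1) ≠ u := by
    intro u h
    exact hadd (u L) (by simpa using congrFun h L)
  have hbne : ∀ u : Wrd n, Function.update u L (u L - 1) ≠ u := by
    intro u h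
    exact hsub (u L) (by simpa using congrFun h L)
  have hab : ∀ u : Wrd n,
      Function.update u L (u L + 1) ≠ Function.update u L (u L - 1) := by
    intro u h
    exact haddsub (u L) (by simpa using congrFun h L)
  have hF1set : ∀ u : Wrd n, {w : Wrd n | w ≠ u ∧ s(u, w) ∈ F1 n} =
      {Function.update u L (u L + 1), Function.update u L (u L - 1)} := by
    intro u
    ext w
    simp only [Set.mem_setOf_eq, Set.mem_insert_iff, Set.mem_singleton_iff,
      f1_iff L hL u w]
    constructor
    · exact fun h => h.2
    · rintro (rfl | rfl)
      · exact ⟨hane u, Or.inl rfl⟩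
      · exact ⟨hbne u, Or.inr rfl⟩
  have hF1card : ∀ u : Wrd n, {w : Wrd n | w ≠ u ∧ s(u, w) ∈ F1 n}.ncard = 2 := by
    intro u
    rw [hF1set u]
    exact Set.ncard_pair (hab u)
  constructor
  · -- Part 1: vertices in W₁
    intro u hu
    have hnoFk : ∀ w : Wrd n, ∀ k, 2 ≤ k → k ≤ n → s(u, w) ∉ Fk n k := by
      intro w k hk2 hkn h
      obtain ⟨h1, -⟩ := fk_necc hk2 hkn h
      exact h1 (hu ⟨k - 1, by omega⟩ (by simp; omega))
    have honlyF1 : ∀ w : Wrd n, s(u, w) ∈ En n → s(u, w) ∈ F1 n := by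
      intro w h
      rcases (en_iff _).mp h with h | ⟨k, hk2, hkn, h⟩
      · exact h
      · exact absurd h (hnoFk w k hk2 hkn)
    refine ⟨?_, fun w _ h => honlyF1 w h⟩
    have : {w : Wrd n | w ≠ u ∧ s(u, w) ∈ En n} =
        {w : Wrd n | w ≠ u ∧ s(u, w) ∈ F1 n} := by
      ext w
      simp only [Set.mem_setOf_eq]
      exact ⟨fun h => ⟨h.1, honlyF1 w h.2⟩, fun h => ⟨h.1, (en_iff _).mpr (Or.inl h.2)⟩⟩
    rw [this]
    exact hF1card u
  · -- Part 2: vertices in W_k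
    intro k hk2 hkn u hu
    set M : Fin n := ⟨k - 2, by omega⟩ with hMdef
    have hM : (M : ℕ) + 1 = k - 1 := by simp [hMdef]; omega
    set K : Fin n := ⟨k - 1, by omega⟩ with hKdef
    have hK : (K : ℕ) + 1 = k := by simp [hKdef]; omega
    obtain ⟨ε, hεdef⟩ : ∃ ε : ZMod 6,
        ε = if Even (u M) ↔ (u K = 1 ∨ u K = 2) then 1 else -1 := ⟨_, rfl⟩
    obtain ⟨z, hzdef⟩ : ∃ z : Wrd n, z = Function.update u M (u M + ε) := ⟨_, rfl⟩
    have hzM : z M = u M + ε := by rw [hzdef, Function.update_self]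
    have hεne : u M + ε ≠ u M := by
      rw [hεdef]
      split
      · exact hadd (u M)
      · have : ∀ x : ZMod 6, x + -1 ≠ x := by decide
        exact this (u M)
    have hzu : z ≠ u := fun h => hεne (by rw [← hzM, h])
    have hML : M ≠ L := by
      intro h
      have : (M : ℕ) = (L : ℕ) := by rw [h]
      simp [hMdef, hLdef] at this; omega
    have hzL : z L = u L := by rw [hzdef, Function.update_of_ne hML.symm]
    have hza : z ≠ Function.update u L (u L + 1) := by
      intro h
      have := congrFun h L
      rw [hzL, Function.update_self] at this
      exact hadd (u L) this.symm
    have hzb : z ≠ Function.update u L (u L - 1) := by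
      intro h
      have := congrFun h L
      rw [hzL, Function.update_self] at this
      exact hsub (u L) this.symm
    have hFkset : {w : Wrd n | w ≠ u ∧ s(u, w) ∈ Fk n k} = {z} := by
      ext w
      simp only [Set.mem_setOf_eq, Set.mem_singleton_iff,
        fk_iff hk2 hkn M K hM hK hu w, ← hεdef, ← hzdef]
      exact ⟨fun h => h.2, fun h => ⟨h ▸ hzu, h⟩⟩
    have hnoFk' : ∀ w : Wrd n, ∀ k', 2 ≤ k' → k' ≤ n → k' ≠ k → s(u, w) ∉ Fk n k' := by
      intro w k' hk2' hkn' hne h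
      obtain ⟨h1, h2⟩ := fk_necc hk2' hkn' h
      rcases lt_or_gt_of_ne hne with hlt | hgt
      · -- k' < k : tail condition of Fk' forces u K ∈ {0,5}
        exact (hu K).1 hK (h2 K (by omega))
      · -- k' > k : u at position k' lies in {0,5} by Wk, contradicting h1
        exact h1 ((hu ⟨k' - 1, by omega⟩).2 (by simp; omega))
    have hEnset : {w : Wrd n | w ≠ u ∧ s(u, w) ∈ En n} =
        {Function.update u L (u L + 1), Function.update u L (u L - 1), z} := by
      ext w
      simp only [Set.mem_setOf_eq, Set.mem_insert_iff, Set.mem_singleton_iff]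
      constructor
      · rintro ⟨hne, h⟩
        rcases (en_iff _).mp h with h | ⟨k', hk2', hkn', h⟩
        · rcases (f1_iff L hL u w).mp h with h | h
          · exact Or.inl h
          · exact Or.inr (Or.inl h)
        · by_cases hkk : k' = k
          · subst hkk
            refine Or.inr (Or.inr ?_)
            rw [hzdef, hεdef]
            exact (fk_iff hk2' hkn' M K hM hK hu w).mp h
          · exact absurd h (hnoFk' w k' hk2' hkn' hkk)
      · rintro (rfl | rfl | hwz)
        · exact ⟨hane u, (en_iff _).mpr (Or.inl ((f1_iff L hL u _).mpr (Or.inl rfl)))⟩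
        · exact ⟨hbne u, (en_iff _).mpr (Or.inl ((f1_iff L hL u _).mpr (Or.inr rfl)))⟩
        · refine ⟨by rw [hwz]; exact hzu, (en_iff _).mpr (Or.inr ⟨k, hk2, hkn,
            (fk_iff hk2 hkn M K hM hK hu w).mpr ?_⟩)⟩
          rw [hwz, hzdef, hεdef]
    refine ⟨?_, hF1card u, by rw [hFkset]; exact Set.ncard_singleton z⟩
    rw [hEnset]
    have hnm : Function.update u L (u L + 1) ∉
        ({Function.update u L (u L - 1), z} : Set (Wrd n)) := by
      simp only [Set.mem_insert_iff, Set.mem_singleton_iff]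
      rintro (h | h)
      · exact hab u h
      · exact hza h.symm
    rw [Set.ncard_insert_of_notMem hnm (Set.toFinite _), Set.ncard_pair hzb.symm]
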